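/- For every natural number n and every real (or rational) t, ∑_{k=0}^{n} 2^{n-k} · s(n,k) · t^k = ∑_{k=0}^{n} b(n,k) · (t)_k, where (t)_k = t(t-1)···(t-k+1) is the falling factorial, s(n,k) are the signed Stirling numbers of the first kind, and b(n,k) are the Bessel numbers of the first kind. -/

import Mathlib

/-!
Both sides equal `∏_{j<n} (t - 2j) = 2ⁿ (t/2)_n`. For the Stirling side this is the falling factorial
expansion at `t/2`, homogenised by `2ⁿ`. For the Bessel side it follows by induction on `n` from the
recurrence `b(n+1,k) = b(n,k-1) + (k-2n) b(n,k)`, which matches `(t)_k (t-2n) = (t)_{k+1} + (k-2n) (t)_k`.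
-/

/-- The signed Stirling numbers of the first kind `s(n,k)`, defined as the
coefficients in the falling factorial expansion
`x(x-1)⋯(x-n+1) = ∑_{k=0}^{n} s(n,k) xᵏ`. -/
noncomputable def stirlingFirst (n k : ℕ) : ℤ :=
  (descPochhammer ℤ n).coeff k

/-- The Bessel numbers of the first kind:
`b(n,k) = (-1)^{n-k} (2n-k-1)! / (2^{n-k} (k-1)! (n-k)!)` for `1 ≤ k ≤ n`,
`b(0,0) = 1`, `b(n,0) = 0` for `n ≥ 1`, and `b(n,k) = 0` for `n < k`. -/
def besselFirst (n k : ℕ) : ℚ :=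
  if k = 0 then (if n = 0 then 1 else 0)
  else if k ≤ n then
    (-1) ^ (n - k) * (Nat.factorial (2 * n - k - 1)) /
      (2 ^ (n - k) * (Nat.factorial (k - 1)) * (Nat.factorial (n - k)))
  else 0

/-- The falling factorial `(t)_k = t(t-1)⋯(t-k+1)`, with `(t)_0 = 1`. -/
def fallingFactorial (t : ℚ) (k : ℕ) : ℚ :=
  ∏ j ∈ Finset.range k, (t - j)

open Finset Polynomial
open scoped Nat

lemma stirlingFirst_cast {R : Type*} [CommRing R] (n k : ℕ) :
    (stirlingFirst n k : R) = (descPochhammer R n).coeff k := by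
  rw [stirlingFirst, ← descPochhammer_map (Int.castRingHom R), coeff_map, eq_intCast]

theorem sum_pow_mul_stirlingFirst_mul_pow {K : Type*} [Field K] {c : K} (hc : c ≠ 0)
    (n : ℕ) (t : K) :
    ∑ k ∈ range (n + 1), c ^ (n - k) * (stirlingFirst n k : K) * t ^ k =
      ∏ j ∈ range n, (t - c * j) := by
  have hdeg : (descPochhammer K n).natDegree = n := descPochhammer_natDegree K n
  calc _ = ((descPochhammer K n).scaleRoots c).eval (c * (t / c)) := by
        rw [mul_div_cancel₀ t hc,
          eval_eq_sum_range' (n := n + 1) (by rw [natDegree_scaleRoots, hdeg]; omega)]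
        refine sum_congr rfl fun k _ => ?_
        rw [coeff_scaleRoots, hdeg, stirlingFirst_cast]
        ring
    _ = ∏ j ∈ range n, (t - c * j) := by
        rw [scaleRoots_eval_mul, hdeg, descPochhammer_eval_eq_prod_range, ← card_range n,
          ← prod_const, card_range, ← prod_mul_distrib]
        refine prod_congr rfl fun j _ => ?_
        field_simp

lemma besselFirst_succ_zero (n : ℕ) : besselFirst (n + 1) 0 = 0 := by
  simp [besselFirst]

lemma besselFirst_of_lt {n k : ℕ} (h : n < k) : besselFirst n k = 0 := by
  simp [besselFirst, not_le.mpr h, (n.zero_le.trans_lt h).ne']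

lemma besselFirst_add_succ (k a : ℕ) :
    besselFirst (k + 1 + a) (k + 1) = (-1) ^ a * (k + 2 * a)! / (2 ^ a * k ! * a !) := by
  rw [besselFirst, if_neg k.succ_ne_zero, if_pos (by omega), show k + 1 + a - (k + 1) = a by omega,
    show 2 * (k + 1 + a) - (k + 1) - 1 = k + 2 * a by omega, Nat.add_sub_cancel]

lemma besselFirst_self (n : ℕ) : besselFirst n n = 1 := by
  cases n with
  | zero => rfl
  | succ k =>
    simpa [Nat.factorial_ne_zero] using besselFirst_add_succ k 0

theorem besselFirst_succ_succ (n k : ℕ) :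
    besselFirst (n + 1) (k + 1) =
      besselFirst n k + ((k + 1 : ℚ) - 2 * n) * besselFirst n (k + 1) := by
  rcases lt_trichotomy n k with h | rfl | h
  · rw [besselFirst_of_lt h, besselFirst_of_lt (by omega), besselFirst_of_lt (by omega)]
    ring
  · rw [besselFirst_self, besselFirst_self, besselFirst_of_lt n.lt_succ_self]
    ring
  obtain ⟨a, rfl⟩ : ∃ a, n = k + 1 + a := ⟨n - (k + 1), by omega⟩
  rw [show k + 1 + a + 1 = k + 1 + (a + 1) from rfl, besselFirst_add_succ, besselFirst_add_succ]
  cases k with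
  | zero =>
    rw [show 0 + 1 + a = a + 1 by ring, besselFirst_succ_zero]
    simp only [zero_add, Nat.factorial_zero, Nat.factorial_succ, show 2 * (a + 1) = 2 * a + 1 + 1 by ring]
    push_cast
    field_simp
    ring
  | succ j =>
    rw [show j + 1 + 1 + a = j + 1 + (a + 1) by ring, besselFirst_add_succ]
    simp only [Nat.factorial_succ, show j + 1 + 2 * (a + 1) = j + 2 * a + 1 + 1 + 1 by ring,
      show j + 2 * (a + 1) = j + 2 * a + 1 + 1 by ring, show j + 1 + 2 * a = j + 2 * a + 1 by ring]
    push_cast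
    field_simp
    ring

lemma fallingFactorial_succ (t : ℚ) (k : ℕ) :
    fallingFactorial t (k + 1) = fallingFactorial t k * (t - k) :=
  prod_range_succ _ _

theorem sum_besselFirst_mul_fallingFactorial (n : ℕ) (t : ℚ) :
    ∑ k ∈ range (n + 1), besselFirst n k * fallingFactorial t k = ∏ j ∈ range n, (t - 2 * j) := by
  induction n with
  | zero => simp [besselFirst, fallingFactorial]
  | succ n ih =>
    set g : ℕ → ℚ := fun k => ((k : ℚ) - 2 * n) * besselFirst n k * fallingFactorial t k
    have hg : ∑ k ∈ range (n + 1), g (k + 1) = ∑ k ∈ range (n + 1), g k := by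
      have hg0 : g 0 = 0 := by cases n <;> simp [g, besselFirst_succ_zero]
      have hgn : g (n + 1) = 0 := by simp [g, besselFirst_of_lt n.lt_succ_self]
      rw [← add_zero (∑ k ∈ range (n + 1), g (k + 1)), ← hg0, ← sum_range_succ', sum_range_succ,
        hgn, add_zero]
    calc ∑ k ∈ range (n + 1 + 1), besselFirst (n + 1) k * fallingFactorial t k
        = ∑ k ∈ range (n + 1), (besselFirst n k * fallingFactorial t (k + 1) + g (k + 1)) := by
          rw [sum_range_succ', besselFirst_succ_zero, zero_mul, add_zero]
          refine sum_congr rfl fun k _ => ?_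
          simp only [g, besselFirst_succ_succ]
          push_cast
          ring
      _ = ∑ k ∈ range (n + 1), besselFirst n k * fallingFactorial t k * (t - 2 * n) := by
          rw [sum_add_distrib, hg, ← sum_add_distrib]
          refine sum_congr rfl fun k _ => ?_
          simp only [g, fallingFactorial_succ]
          ring
      _ = ∏ j ∈ range (n + 1), (t - 2 * j) := by
          rw [← sum_mul, ih, prod_range_succ]

theorem stmt3 (n : ℕ) (t : ℚ) :
    ∑ k ∈ Finset.range (n + 1), 2 ^ (n - k) * (stirlingFirst n k : ℚ) * t ^ k =
      ∑ k ∈ Finset.range (n + 1), besselFirst n k * fallingFactorial t k := by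
  rw [sum_besselFirst_mul_fallingFactorial, sum_pow_mul_stirlingFirst_mul_pow two_ne_zero]
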